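/- arXiv:math/9811173 — 2 statements merged into one kernel-verified Lean document; each statement's English description precedes it below -/
import Mathlib

section
/- Let k be a field and let P = k[t] be the polynomial ring. For a ∈ k, let k_a denote k regarded as a P-module via the evaluation homomorphism sending t to a. Let C be a bounded cochain complex of free finitely generated P-modules, and for each integer i let r_i denote the rank of the finitely generated P-module H^i(C) (the rank of its free part). Then for every integer i: (1) for every a ∈ k, dim_k H^i(C ⊗_P k_a) ≥ r_i, and (2) the set of a ∈ k for which dim_k H^i(C ⊗_P k_a) > r_i is finite. -/
open Polynomial Matrix

/-- A bounded cochain complex of free finitely generated modules over the polynomial ring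
`P = k[τ]`, presented by a rank function and differential matrices (the degree `i`
differential `dᵢ : C^i → C^{i+1}` is given by the matrix `d i`). -/
structure FreePolyComplex (k : Type) [Field k] where
  rank : ℤ → ℕ
  d : ∀ i : ℤ, Matrix (Fin (rank (i + 1))) (Fin (rank i)) (Polynomial k)
  bounded : ∃ B : ℕ, ∀ i : ℤ, (B : ℤ) < |i| → rank i = 0
  dsq : ∀ i : ℤ, d (i + 1) * d i = 0

namespace FreePolyComplex

variable {k : Type} [Field k]

/-- The degree `i` differential of the complex `C ⊗_P k_a` of `k`-vector spaces obtained
by tensoring with `k_a` (i.e. evaluating all matrix entries at `τ = a`). -/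
noncomputable def dEval (C : FreePolyComplex k) (a : k) (i : ℤ) :
    (Fin (C.rank i) → k) →ₗ[k] (Fin (C.rank (i + 1)) → k) :=
  Matrix.mulVecLin ((C.d i).map (Polynomial.eval a))

/-- Transport along an equality of degrees. -/
def castHom (C : FreePolyComplex k) {i j : ℤ} (h : i = j) :
    (Fin (C.rank i) → k) →ₗ[k] (Fin (C.rank j) → k) := by subst h; exact LinearMap.id

/-- The cocycles `Z^q(C ⊗_P k_a)`. -/
noncomputable def cocyclesEval (C : FreePolyComplex k) (a : k) (q : ℤ) :
    Submodule k (Fin (C.rank q) → k) := LinearMap.ker (C.dEval a q)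

/-- The coboundaries `B^q(C ⊗_P k_a)`. -/
noncomputable def coboundariesEval (C : FreePolyComplex k) (a : k) (q : ℤ) :
    Submodule k (Fin (C.rank q) → k) :=
  (LinearMap.range (C.dEval a (q - 1))).map (C.castHom (by ring))

/-- The cohomology `H^q(C ⊗_P k_a)`. -/
noncomputable def cohomologyEval (C : FreePolyComplex k) (a : k) (q : ℤ) :=
  (C.cocyclesEval a q) ⧸ ((C.coboundariesEval a q).comap (C.cocyclesEval a q).subtype)

noncomputable instance (C : FreePolyComplex k) (a : k) (q : ℤ) :
    AddCommGroup (C.cohomologyEval a q) :=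
  inferInstanceAs (AddCommGroup
    ((C.cocyclesEval a q) ⧸ ((C.coboundariesEval a q).comap (C.cocyclesEval a q).subtype)))

noncomputable instance (C : FreePolyComplex k) (a : k) (q : ℤ) :
    Module k (C.cohomologyEval a q) :=
  inferInstanceAs (Module k
    ((C.cocyclesEval a q) ⧸ ((C.coboundariesEval a q).comap (C.cocyclesEval a q).subtype)))

/-- A cochain map between complexes of free `k[τ]`-modules, presented by matrices. -/
structure Hom (C D : FreePolyComplex k) where
  f : ∀ i : ℤ, Matrix (Fin (D.rank i)) (Fin (C.rank i)) (Polynomial k)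
  comm : ∀ i : ℤ, D.d i * f i = f (i + 1) * C.d i

namespace Hom

variable {C D : FreePolyComplex k}

/-- The degree `i` component of `f ⊗_P k_a`. -/
noncomputable def eval (φ : Hom C D) (a : k) (i : ℤ) :
    (Fin (C.rank i) → k) →ₗ[k] (Fin (D.rank i) → k) :=
  Matrix.mulVecLin ((φ.f i).map (Polynomial.eval a))

lemma comm_eval (φ : Hom C D) (a : k) (i : ℤ) :
    (D.dEval a i).comp (φ.eval a i) = (φ.eval a (i + 1)).comp (C.dEval a i) := by
  unfold FreePolyComplex.dEval Hom.eval
  rw [← Matrix.mulVecLin_mul, ← Matrix.mulVecLin_mul]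
  have h : (D.d i * φ.f i).map (⇑(Polynomial.evalRingHom a)) =
      (φ.f (i + 1) * C.d i).map (⇑(Polynomial.evalRingHom a)) := by rw [φ.comm i]
  rw [Matrix.map_mul, Matrix.map_mul] at h
  simpa [Polynomial.coe_evalRingHom] using congrArg Matrix.mulVecLin h

lemma eval_cast (φ : Hom C D) (a : k) {i j : ℤ} (h : i = j) :
    (φ.eval a j).comp (C.castHom h) = (D.castHom h).comp (φ.eval a i) := by
  subst h; rfl

lemma eval_mem_cocycles (φ : Hom C D) (a : k) (q : ℤ) :
    ∀ x ∈ C.cocyclesEval a q, φ.eval a q x ∈ D.cocyclesEval a q := by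
  intro x hx
  have := LinearMap.congr_fun (φ.comm_eval a q) x
  simp only [LinearMap.coe_comp, Function.comp_apply] at this
  simp only [FreePolyComplex.cocyclesEval, LinearMap.mem_ker] at hx ⊢
  rw [this, hx, map_zero]

/-- The map induced by `φ ⊗_P k_a` on cocycles. -/
noncomputable def cocyclesMap (φ : Hom C D) (a : k) (q : ℤ) :
    C.cocyclesEval a q →ₗ[k] D.cocyclesEval a q :=
  (φ.eval a q).restrict (φ.eval_mem_cocycles a q)

lemma eval_mem_coboundaries (φ : Hom C D) (a : k) (q : ℤ) :
    ∀ x ∈ C.coboundariesEval a q, φ.eval a q x ∈ D.coboundariesEval a q := by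
  intro x hx
  simp only [FreePolyComplex.coboundariesEval, Submodule.mem_map, LinearMap.mem_range] at hx ⊢
  obtain ⟨z, ⟨y, hy⟩, hz⟩ := hx
  refine ⟨φ.eval a (q - 1 + 1) z, ⟨φ.eval a (q - 1) y, ?_⟩, ?_⟩
  · rw [← hy]
    have := LinearMap.congr_fun (φ.comm_eval a (q - 1)) y
    simp only [LinearMap.coe_comp, Function.comp_apply] at this
    exact this
  · rw [← hz]
    have := LinearMap.congr_fun (φ.eval_cast a (by ring : q - 1 + 1 = q)) z
    simp only [LinearMap.coe_comp, Function.comp_apply] at this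
    exact this.symm

/-- The induced map `f^* : H^q(C ⊗_P k_a) → H^q(D ⊗_P k_a)` on cohomology. -/
noncomputable def cohomologyMap (φ : Hom C D) (a : k) (q : ℤ) :
    C.cohomologyEval a q →ₗ[k] D.cohomologyEval a q :=
  Submodule.mapQ _ _ (φ.cocyclesMap a q) (by
    intro x hx
    simp only [Submodule.mem_comap] at hx ⊢
    exact φ.eval_mem_coboundaries a q x hx)

end Hom

end FreePolyComplex

/-- `k_a`: the field `k` regarded as a module over `P = k[t]` via the evaluation
homomorphism sending `t` to `a`. -/
def Ka (k : Type) [Field k] (a : k) : Type := k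

instance (k : Type) [Field k] (a : k) : AddCommGroup (Ka k a) :=
  inferInstanceAs (AddCommGroup k)

noncomputable instance (k : Type) [Field k] (a : k) : Module (Polynomial k) (Ka k a) :=
  Module.compHom k (Polynomial.evalRingHom a)

namespace FreePolyComplex

variable {k : Type} [Field k]

/-- Transport along an equality of degrees, over `P = k[t]`. -/
noncomputable def castHomP (C : FreePolyComplex k) {i j : ℤ} (h : i = j) :
    (Fin (C.rank i) → Polynomial k) →ₗ[Polynomial k] (Fin (C.rank j) → Polynomial k) := by
  subst h; exact LinearMap.id

/-- The `P`-module `Z^q(C)` of degree `q` cocycles of `C`. -/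
noncomputable def cocyclesP (C : FreePolyComplex k) (q : ℤ) :
    Submodule (Polynomial k) (Fin (C.rank q) → Polynomial k) :=
  LinearMap.ker (Matrix.mulVecLin (C.d q))

/-- The `P`-module `B^q(C)` of degree `q` coboundaries of `C`. -/
noncomputable def coboundariesP (C : FreePolyComplex k) (q : ℤ) :
    Submodule (Polynomial k) (Fin (C.rank q) → Polynomial k) :=
  (LinearMap.range (Matrix.mulVecLin (C.d (q - 1)))).map (C.castHomP (by ring))

/-- The cohomology `H^q(C)` as a `P = k[t]`-module. -/
noncomputable def cohomologyP (C : FreePolyComplex k) (q : ℤ) :=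
  (C.cocyclesP q) ⧸ ((C.coboundariesP q).comap (C.cocyclesP q).subtype)

noncomputable instance (C : FreePolyComplex k) (q : ℤ) :
    AddCommGroup (C.cohomologyP q) :=
  inferInstanceAs (AddCommGroup
    ((C.cocyclesP q) ⧸ ((C.coboundariesP q).comap (C.cocyclesP q).subtype)))

noncomputable instance (C : FreePolyComplex k) (q : ℤ) :
    Module (Polynomial k) (C.cohomologyP q) :=
  inferInstanceAs (Module (Polynomial k)
    ((C.cocyclesP q) ⧸ ((C.coboundariesP q).comap (C.cocyclesP q).subtype)))

end FreePolyComplex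

/-!
With `n = rank C^i`, rank–nullity gives `dim_k H^i(C ⊗ k_a) = n - rk d_{i-1}(a) - rk d_i(a)`,
where `d(a)` is `d` with `t` specialised to `a`; rank–nullity over the domain `k[t]` gives
`rank H^i(C) = n - rk d_{i-1} - rk d_i` in the same way. A nonzero minor of `d(a)` is the value
at `a` of a nonzero minor of `d`, so `rk d(a) ≤ rk d`. Conversely `d` has a nonzero minor of
size `rk d` (found over `k(t)`), and away from its finitely many roots `rk d(a) = rk d`.
-/

open Module

namespace Matrix

variable {m n : Type*} [Fintype n]

section Domain

variable {R : Type*} [CommRing R] [IsDomain R]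

lemma le_rank_of_det_submatrix_ne_zero (A : Matrix m n R) {s : ℕ} (r : Fin s → m)
    (c : Fin s → n) (h : (A.submatrix r c).det ≠ 0) : s ≤ A.rank := by
  simpa [rank_of_det_ne_zero h] using A.rank_submatrix_le r c

lemma rank_add_finrank_ker_mulVecLin (A : Matrix m n R) :
    A.rank + finrank R (LinearMap.ker A.mulVecLin) = Fintype.card n := by
  rw [rank, ← A.mulVecLin.quotKerEquivRange.finrank_eq, Submodule.finrank_quotient_add_finrank,
    finrank_fintype_fun_eq_card]

lemma finrank_quotient_add_finrank_add_rank [IsNoetherianRing R] (A : Matrix m n R)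
    {B : Submodule R (n → R)} (hB : B ≤ LinearMap.ker A.mulVecLin) :
    finrank R (LinearMap.ker A.mulVecLin ⧸ B.comap (LinearMap.ker A.mulVecLin).subtype)
      + finrank R B + A.rank = Fintype.card n := by
  rw [← (Submodule.comapSubtypeEquivOfLe hB).finrank_eq, Submodule.finrank_quotient_add_finrank,
    add_comm, A.rank_add_finrank_ker_mulVecLin]

end Domain

lemma rank_le_rank_map_algebraMap {R : Type*} [CommRing R] (K : Type*) [Field K] [Algebra R K]
    [IsFractionRing R K] (A : Matrix m n R) : A.rank ≤ (A.map (algebraMap R K)).rank := by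
  obtain ⟨v, hv⟩ :=
    exists_linearIndependent_of_le_finrank (R := R) (M := LinearMap.range A.mulVecLin) le_rfl
  let ι : (m → R) →ₗ[R] (m → K) := (Algebra.linearMap R K).compLeft m
  have hι : Function.Injective ι := fun x y hxy =>
    funext fun i => IsFractionRing.injective R K (congr_fun hxy i)
  have hvK : LinearIndependent K (ι ∘ Subtype.val ∘ v) :=
    (LinearIndependent.iff_fractionRing R K).mp
      ((hv.map' _ (Submodule.ker_subtype _)).map' ι (LinearMap.ker_eq_bot.mpr hι))
  have hmem : Set.range (ι ∘ Subtype.val ∘ v) ⊆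
      LinearMap.range (A.map (algebraMap R K)).mulVecLin := by
    rintro _ ⟨j, rfl⟩
    obtain ⟨y, hy⟩ := (v j).2
    exact ⟨algebraMap R K ∘ y, funext fun i => by simp [ι, ← hy, RingHom.map_mulVec]⟩
  calc A.rank = finrank K (Submodule.span K (Set.range (ι ∘ Subtype.val ∘ v))) := by
        rw [finrank_span_eq_card hvK, Fintype.card_fin]; rfl
    _ ≤ _ := Submodule.finrank_mono (Submodule.span_le.mpr hmem)

variable [Fintype m] {F : Type*} [Field F]

lemma exists_linearIndependent_col (A : Matrix m n F) :
    ∃ c : Fin A.rank → n, LinearIndependent F (A.col ∘ c) := by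
  obtain ⟨κ, a, -, hspan, hli⟩ := exists_linearIndependent' F A.col
  have := hli.finite
  have : Fintype κ := Fintype.ofFinite κ
  have hcard : Fintype.card κ = A.rank := by
    rw [rank_eq_finrank_span_cols, ← hspan, finrank_span_eq_card hli]
  let e : Fin A.rank ≃ κ := (Fintype.equivFinOfCardEq hcard).symm
  exact ⟨a ∘ e, hli.comp e e.injective⟩

lemma exists_det_submatrix_ne_zero (A : Matrix m n F) :
    ∃ (r : Fin A.rank → m) (c : Fin A.rank → n), (A.submatrix r c).det ≠ 0 := by
  obtain ⟨c, hc⟩ := A.exists_linearIndependent_col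
  set B := A.submatrix id c
  have hB : Bᵀ.rank = A.rank := by
    rw [LinearIndependent.rank_matrix (M := Bᵀ) hc, Fintype.card_fin]
  have hrows := Bᵀ.exists_linearIndependent_col
  rw [hB] at hrows
  obtain ⟨r, hr⟩ := hrows
  have hunit : IsUnit (A.submatrix r c) := linearIndependent_rows_iff_isUnit.mp hr
  exact ⟨r, c, ((isUnit_iff_isUnit_det _).mp hunit).ne_zero⟩

variable {R : Type*} [CommRing R] [IsDomain R]

lemma rank_map_le (A : Matrix m n R) (f : R →+* F) : (A.map f).rank ≤ A.rank := by
  obtain ⟨r, c, h⟩ := (A.map f).exists_det_submatrix_ne_zero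
  refine A.le_rank_of_det_submatrix_ne_zero r c fun h0 => h ?_
  rw [submatrix_map, ← RingHom.mapMatrix_apply, ← RingHom.map_det, h0, map_zero]

lemma exists_ne_zero_rank_le_rank_map (A : Matrix m n R) :
    ∃ g : R, g ≠ 0 ∧ ∀ f : R →+* F, f g ≠ 0 → A.rank ≤ (A.map f).rank := by
  let K := FractionRing R
  obtain ⟨r, c, h⟩ := (A.map (algebraMap R K)).exists_det_submatrix_ne_zero
  rw [submatrix_map, ← RingHom.mapMatrix_apply, ← RingHom.map_det] at h
  refine ⟨(A.submatrix r c).det, fun h0 => h (by rw [h0, map_zero]), fun f hf => ?_⟩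
  refine (A.rank_le_rank_map_algebraMap K).trans
    ((A.map f).le_rank_of_det_submatrix_ne_zero r c ?_)
  rwa [submatrix_map, ← RingHom.mapMatrix_apply, ← RingHom.map_det]

lemma finite_setOf_rank_map_eval_lt {k : Type*} [Field k] (A : Matrix m n (Polynomial k)) :
    {a : k | (A.map (eval a)).rank < A.rank}.Finite := by
  obtain ⟨g, hg0, hg⟩ := A.exists_ne_zero_rank_le_rank_map (F := k)
  refine (finite_setOfPred_isRoot hg0).subset fun a ha => ?_
  by_contra hroot
  exact (hg (evalRingHom a) hroot).not_gt ha

end Matrix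

namespace FreePolyComplex

variable {k : Type} [Field k] (C : FreePolyComplex k)

lemma finrank_map_castHom {p q : ℤ} (h : p = q) (S : Submodule k (Fin (C.rank p) → k)) :
    finrank k (S.map (C.castHom h)) = finrank k S := by
  subst h; rw [castHom, Submodule.map_id]

lemma finrank_map_castHomP {p q : ℤ} (h : p = q)
    (S : Submodule (Polynomial k) (Fin (C.rank p) → Polynomial k)) :
    finrank (Polynomial k) (S.map (C.castHomP h)) = finrank (Polynomial k) S := by
  subst h; rw [castHomP, Submodule.map_id]

lemma d_mulVec_castHomP_d_mulVec {p q : ℤ} (h : p + 1 = q) (y : Fin (C.rank p) → Polynomial k) :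
    C.d q *ᵥ C.castHomP h (C.d p *ᵥ y) = 0 := by
  subst h
  rw [castHomP, LinearMap.id_apply, mulVec_mulVec, C.dsq, zero_mulVec]

lemma dEval_castHom_dEval (a : k) {p q : ℤ} (h : p + 1 = q) (y : Fin (C.rank p) → k) :
    C.dEval a q (C.castHom h (C.dEval a p y)) = 0 := by
  subst h
  have hmap : (C.d (p + 1)).map (eval a) * (C.d p).map (eval a) = 0 := by
    rw [← coe_evalRingHom, ← Matrix.map_mul, C.dsq, Matrix.map_zero _ (map_zero _)]
  rw [castHom, LinearMap.id_apply, dEval, dEval, mulVecLin_apply, mulVecLin_apply, mulVec_mulVec,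
    hmap, zero_mulVec]

lemma coboundariesP_le_cocyclesP (q : ℤ) : C.coboundariesP q ≤ C.cocyclesP q := by
  rintro _ ⟨_, ⟨y, rfl⟩, rfl⟩
  exact C.d_mulVec_castHomP_d_mulVec _ y

lemma coboundariesEval_le_cocyclesEval (a : k) (q : ℤ) :
    C.coboundariesEval a q ≤ C.cocyclesEval a q := by
  rintro _ ⟨_, ⟨y, rfl⟩, rfl⟩
  exact C.dEval_castHom_dEval a _ y

lemma finrank_cohomologyEval_add_rank_add_rank (a : k) (q : ℤ) :
    finrank k (C.cohomologyEval a q) + ((C.d (q - 1)).map (eval a)).rank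
      + ((C.d q).map (eval a)).rank = C.rank q := by
  have := ((C.d q).map (eval a)).finrank_quotient_add_finrank_add_rank
    (C.coboundariesEval_le_cocyclesEval a q)
  rwa [coboundariesEval, finrank_map_castHom, Fintype.card_fin] at this

lemma finrank_cohomologyP_add_rank_add_rank (q : ℤ) :
    finrank (Polynomial k) (C.cohomologyP q) + (C.d (q - 1)).rank + (C.d q).rank = C.rank q := by
  have := (C.d q).finrank_quotient_add_finrank_add_rank (C.coboundariesP_le_cocyclesP q)
  rwa [coboundariesP, finrank_map_castHomP, Fintype.card_fin] at this

end FreePolyComplex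

/-- Let `k` be a field, `P = k[t]`, and for `a ∈ k` let `k_a` denote `k`
viewed as a `P`-module via evaluation at `a`.  Let `C` be a bounded cochain complex of free
finitely generated `P`-modules and let `r` be the rank of the finitely generated `P`-module
`H^i(C)` (the dimension over the fraction field `k(t)` after tensoring with `k(t)`).  Then
(1) `dim_k H^i(C ⊗_P k_a) ≥ r` for every `a ∈ k`, and (2) the set of `a ∈ k` with
`dim_k H^i(C ⊗_P k_a) > r` is finite. -/
theorem cohomology_dim_ge_rank_and_generic_eq
    {k : Type} [Field k] (C : FreePolyComplex k) (i : ℤ) (r : ℕ)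
    (hr : r = Module.finrank (FractionRing (Polynomial k))
        (TensorProduct (Polynomial k) (FractionRing (Polynomial k)) (C.cohomologyP i))) :
    (∀ a : k, r ≤ Module.finrank k (C.cohomologyEval a i)) ∧
      {a : k | r < Module.finrank k (C.cohomologyEval a i)}.Finite := by
  have hrank : r + (C.d (i - 1)).rank + (C.d i).rank = C.rank i := by
    rw [hr, (TensorProduct.isBaseChange (Polynomial k) (C.cohomologyP i)
      (FractionRing (Polynomial k))).finrank_eq]
    exact C.finrank_cohomologyP_add_rank_add_rank i
  have hle : ∀ (q : ℤ) (a : k), ((C.d q).map (eval a)).rank ≤ (C.d q).rank := fun q a =>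
    (C.d q).rank_map_le (evalRingHom a)
  have hdefect : ∀ a, finrank k (C.cohomologyEval a i) =
      r + ((C.d (i - 1)).rank - ((C.d (i - 1)).map (eval a)).rank)
        + ((C.d i).rank - ((C.d i).map (eval a)).rank) := fun a => by
    have := C.finrank_cohomologyEval_add_rank_add_rank a i
    have := hle i a
    have := hle (i - 1) a
    omega
  refine ⟨fun a => by rw [hdefect a]; omega, ?_⟩
  refine ((C.d i).finite_setOf_rank_map_eval_lt.union
    (C.d (i - 1)).finite_setOf_rank_map_eval_lt).subset fun a ha => ?_
  simp only [Set.mem_ofPred_eq, hdefect a] at ha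
  simp only [Set.mem_union, Set.mem_ofPred_eq]
  omega
end

section
/- Let k be a field and let C = ⊕ C^q be a cochain complex of finite-dimensional k-vector spaces, vanishing outside finitely many degrees, equipped with a linear deformation of differentials δ_t = δ_0 + t δ_1, where δ_0, δ_1 : C^* → C^{*+1} are degree-one k-linear maps satisfying δ_0² = 0, δ_0 δ_1 + δ_1 δ_0 = 0, and δ_1² = 0. Fix an integer i and a cohomology class u ∈ H^i(C, δ_0). Then the following are equivalent: (a) there exist a natural number N and elements c_0, c_1, …, c_N ∈ C^i such that δ_0(c_0) = 0, the class of c_0 in H^i(C, δ_0) equals u, δ_0(c_j) + δ_1(c_{j-1}) = 0 for all 1 ≤ j ≤ N, and δ_1(c_N) = 0; (b) for every natural number r ≥ 1 there exist elements c_0, c_1, …, c_{r-1} ∈ C^i such that δ_0(c_0) = 0, the class of c_0 in H^i(C, δ_0) equals u, and δ_0(c_j) + δ_1(c_{j-1}) = 0 for all 1 ≤ j ≤ r−1. -/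
/-- Transport along an equality of degrees in a graded family of modules. -/
def gradedCast (k : Type*) [Field k] (V : ℤ → Type*)
    [∀ i, AddCommGroup (V i)] [∀ i, Module k (V i)]
    {a b : ℤ} (h : a = b) : V a →ₗ[k] V b := by
  subst h; exact LinearMap.id

section Aux

variable {k : Type*} [Field k] {V W : Type*} [AddCommGroup V] [Module k V]
  [AddCommGroup W] [Module k W]

/-- A descending chain of submodules of a finite dimensional space has two equal
consecutive terms. -/
lemma massey_aux_antitone_stab [FiniteDimensional k V] (S : ℕ → Submodule k V)
    (h : ∀ n, S (n + 1) ≤ S n) : ∃ n, S (n + 1) = S n := by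
  by_contra hc
  push_neg at hc
  have hfr : ∀ n, Module.finrank k (S (n + 1)) < Module.finrank k (S n) := fun n =>
    Submodule.finrank_lt_finrank_of_lt (lt_of_le_of_ne (h n) (hc n))
  have hb : ∀ n, Module.finrank k (S n) + n ≤ Module.finrank k (S 0) := by
    intro n
    induction n with
    | zero => simp
    | succ m ih => have := hfr m; omega
  have := hb (Module.finrank k (S 0) + 1)
  omega

/-- An ascending chain of submodules of a finite dimensional space has two equal
consecutive terms. -/
lemma massey_aux_monotone_stab [FiniteDimensional k V] (S : ℕ → Submodule k V)
    (h : ∀ n, S n ≤ S (n + 1)) : ∃ n, S (n + 1) = S n := by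
  by_contra hc
  push_neg at hc
  have hfr : ∀ n, Module.finrank k (S n) < Module.finrank k (S (n + 1)) := fun n =>
    Submodule.finrank_lt_finrank_of_lt (lt_of_le_of_ne (h n) (Ne.symm (hc n)))
  have hb : ∀ n, n ≤ Module.finrank k (S n) := by
    intro n
    induction n with
    | zero => simp
    | succ m ih => have := hfr m; omega
  have h1 := hb (Module.finrank k V + 1)
  have h2 : Module.finrank k (S (Module.finrank k V + 1)) ≤ Module.finrank k V :=
    Submodule.finrank_le _
  omega

/-- Key linear-algebra lemma: if `P` is a subspace with `∀ x ∈ P, B x ∈ A(P)`, and `Q`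
is a subspace with `B⁻¹(A(Q)) = Q` (both inclusions), then every element of `P` killed
by `A` lies in `Q`. -/
lemma massey_aux_key [FiniteDimensional k V] [FiniteDimensional k W]
    (A B : V →ₗ[k] W) (P Q : Submodule k V)
    (hP : ∀ x ∈ P, ∃ y ∈ P, A y = B x)
    (hQ1 : ∀ y : V, B y ∈ Q.map A → y ∈ Q)
    (hQ2 : ∀ y ∈ Q, B y ∈ Q.map A) :
    ∀ x ∈ P, A x = 0 → x ∈ Q := by
  set AQ : Submodule k W := Q.map A with hAQ
  have hA : Q ≤ AQ.comap A := fun x hx => Submodule.mem_map_of_mem hx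
  have hB : Q ≤ AQ.comap B := fun x hx => hQ2 x hx
  set Abar : (V ⧸ Q) →ₗ[k] (W ⧸ AQ) := Q.mapQ AQ A hA with hAbar
  set Bbar : (V ⧸ Q) →ₗ[k] (W ⧸ AQ) := Q.mapQ AQ B hB with hBbar
  have hBinj : Function.Injective Bbar := by
    rw [← LinearMap.ker_eq_bot]
    rw [Submodule.eq_bot_iff]
    intro z hz
    obtain ⟨y, rfl⟩ := Submodule.Quotient.mk_surjective Q z
    have : Bbar (Submodule.Quotient.mk y) = Submodule.Quotient.mk (B y) :=
      Submodule.mapQ_apply _ _ _ _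
    rw [LinearMap.mem_ker, this, Submodule.Quotient.mk_eq_zero] at hz
    rw [Submodule.Quotient.mk_eq_zero]
    exact hQ1 y hz
  set Pb : Submodule k (V ⧸ Q) := P.map Q.mkQ with hPb
  have hle : Pb.map Bbar ≤ Pb.map Abar := by
    rintro w hw
    obtain ⟨v, hv, rfl⟩ := hw
    obtain ⟨x, hxP, rfl⟩ := hv
    obtain ⟨y, hyP, hy⟩ := hP x hxP
    have h1 : Bbar (Q.mkQ x) = Submodule.Quotient.mk (B x) := Submodule.mapQ_apply _ _ _ _
    have h2 : Abar (Q.mkQ y) = Submodule.Quotient.mk (A y) := Submodule.mapQ_apply _ _ _ _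
    rw [h1, ← hy, ← h2]
    exact Submodule.mem_map_of_mem (Submodule.mem_map_of_mem hyP)
  have e : Pb ≃ₗ[k] Pb.map Bbar := Submodule.equivMapOfInjective Bbar hBinj Pb
  have hfr1 : Module.finrank k Pb = Module.finrank k (Pb.map Bbar) := e.finrank_eq
  have hfr2 : Module.finrank k (Pb.map Bbar) ≤ Module.finrank k (Pb.map Abar) :=
    Submodule.finrank_mono hle
  have hfr3 : Module.finrank k (Pb.map Abar) ≤ Module.finrank k Pb :=
    Submodule.finrank_map_le Abar Pb
  have hfr : Module.finrank k (Pb.map Abar) = Module.finrank k Pb := le_antisymm hfr3 (by omega)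
  -- `Abar` restricted to `Pb` is injective
  set g : Pb →ₗ[k] (W ⧸ AQ) := Abar.comp Pb.subtype with hg
  have hrange : LinearMap.range g = Pb.map Abar := by
    rw [hg, LinearMap.range_comp, Submodule.range_subtype]
  have hrn := LinearMap.finrank_range_add_finrank_ker g
  rw [hrange, hfr] at hrn
  have hker : LinearMap.ker g = ⊥ := by
    have : Module.finrank k (LinearMap.ker g) = 0 := by omega
    exact Submodule.finrank_eq_zero.mp this
  intro x hxP hxA
  have hmem : Q.mkQ x ∈ Pb := Submodule.mem_map_of_mem hxP
  have hgz : g ⟨Q.mkQ x, hmem⟩ = 0 := by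
    show Abar (Q.mkQ x) = 0
    have : Abar (Q.mkQ x) = Submodule.Quotient.mk (A x) := Submodule.mapQ_apply _ _ _ _
    rw [this, hxA]
    exact Submodule.Quotient.mk_zero _
  have : (⟨Q.mkQ x, hmem⟩ : Pb) = 0 := by
    rw [← Submodule.mem_bot (R := k), ← hker]
    exact hgz
  have hz : Q.mkQ x = 0 := congrArg Subtype.val this
  rwa [← Submodule.Quotient.mk_eq_zero]

end Aux

/-- Let `(C, δ_t = δ_0 + t δ_1)` be a linear deformation of a cochain complex
of finite dimensional `k`-vector spaces vanishing outside finitely many degrees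
(`δ_0² = 0`, `δ_0 δ_1 + δ_1 δ_0 = 0`, `δ_1² = 0`).  Fix a degree `i` and a cohomology class
`u ∈ H^i(C, δ_0)`, given by a representative cocycle `u0` (two cocycles represent the same class
iff their difference is a `δ_0`-coboundary from degree `i-1`).  Then the following are
equivalent:
(a) there are `N` and `c_0, …, c_N ∈ C^i` with `δ_0 c_0 = 0`, `[c_0] = u`,
    `δ_0 c_j + δ_1 c_{j-1} = 0` for `1 ≤ j ≤ N`, and `δ_1 c_N = 0`;
(b) for every `r ≥ 1` there are `c_0, …, c_{r-1} ∈ C^i` with `δ_0 c_0 = 0`, `[c_0] = u` and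
    `δ_0 c_j + δ_1 c_{j-1} = 0` for `1 ≤ j ≤ r - 1`. -/
theorem massey_survivor_iff_polynomial_cocycle_lift
    {k : Type*} [Field k] (V : ℤ → Type*)
    [∀ i, AddCommGroup (V i)] [∀ i, Module k (V i)]
    [∀ i, FiniteDimensional k (V i)]
    (δ0 δ1 : ∀ i : ℤ, V i →ₗ[k] V (i + 1))
    (hbounded : ∃ B : ℕ, ∀ i : ℤ, (B : ℤ) < |i| → ∀ x : V i, x = 0)
    (h00 : ∀ i : ℤ, (δ0 (i + 1)).comp (δ0 i) = 0)
    (h01 : ∀ i : ℤ, (δ0 (i + 1)).comp (δ1 i) + (δ1 (i + 1)).comp (δ0 i) = 0)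
    (h11 : ∀ i : ℤ, (δ1 (i + 1)).comp (δ1 i) = 0)
    (i : ℤ) (u0 : V i) (hu0 : δ0 i u0 = 0) :
    (∃ (N : ℕ) (c : ℕ → V i),
        δ0 i (c 0) = 0 ∧
        (∃ y : V (i - 1), c 0 - u0 = gradedCast k V (by ring) (δ0 (i - 1) y)) ∧
        (∀ j : ℕ, 1 ≤ j → j ≤ N → δ0 i (c j) + δ1 i (c (j - 1)) = 0) ∧
        δ1 i (c N) = 0)
    ↔
    (∀ r : ℕ, 1 ≤ r → ∃ c : ℕ → V i,
        δ0 i (c 0) = 0 ∧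
        (∃ y : V (i - 1), c 0 - u0 = gradedCast k V (by ring) (δ0 (i - 1) y)) ∧
        (∀ j : ℕ, 1 ≤ j → j ≤ r - 1 → δ0 i (c j) + δ1 i (c (j - 1)) = 0)) := by
  set A := δ0 i with hAdef
  set B := δ1 i with hBdef
  constructor
  · -- (a) → (b) : extend the chain by zero
    rintro ⟨N, c, h0, hcls, hmid, htop⟩ r hr
    refine ⟨fun j => if j ≤ N then c j else 0, by simpa using h0, by simpa using hcls, ?_⟩
    intro j hj1 hjr
    by_cases hjN : j ≤ N
    · have hj1N : j - 1 ≤ N := le_trans (Nat.sub_le j 1) hjN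
      simp only [if_pos hjN, if_pos hj1N]
      exact hmid j hj1 hjN
    · by_cases hj1N : j - 1 ≤ N
      · have hje : j - 1 = N := by omega
        simp only [if_neg hjN, if_pos hj1N, hje, map_zero, zero_add]
        simpa using htop
      · simp only [if_neg hjN, if_neg hj1N, map_zero, zero_add]
  · -- (b) → (a)
    intro hb
    -- the "one-step extension" operator on subspaces
    set Φ : Submodule k (V i) → Submodule k (V i) :=
      fun s => (s.map A).comap B with hΦdef
    have hΦmono : Monotone Φ := fun s t hst =>
      Submodule.comap_mono (Submodule.map_mono hst)
    set Pn : ℕ → Submodule k (V i) := fun n => Φ^[n] ⊤ with hPndef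
    set Qn : ℕ → Submodule k (V i) := fun n => Φ^[n] (LinearMap.ker B) with hQndef
    have hPsucc : ∀ n, Pn (n + 1) = Φ (Pn n) := fun n => Function.iterate_succ_apply' Φ n ⊤
    have hQsucc : ∀ n, Qn (n + 1) = Φ (Qn n) := fun n =>
      Function.iterate_succ_apply' Φ n (LinearMap.ker B)
    have hPanti : ∀ n, Pn (n + 1) ≤ Pn n := by
      intro n
      induction n with
      | zero => rw [hPsucc 0]; exact le_top
      | succ m ih =>
        calc Pn (m + 1 + 1) = Φ (Pn (m + 1)) := hPsucc (m + 1)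
          _ ≤ Φ (Pn m) := hΦmono ih
          _ = Pn (m + 1) := (hPsucc m).symm
    have hQmono : ∀ n, Qn n ≤ Qn (n + 1) := by
      intro n
      induction n with
      | zero =>
        rw [hQsucc 0]
        intro x hx
        have hx0 : B x = 0 := hx
        simp only [hΦdef, Submodule.mem_comap, hx0]
        exact Submodule.zero_mem _
      | succ m ih =>
        calc Qn (m + 1) = Φ (Qn m) := hQsucc m
          _ ≤ Φ (Qn (m + 1)) := hΦmono ih
          _ = Qn (m + 1 + 1) := (hQsucc (m + 1)).symm
    obtain ⟨R, hR⟩ := massey_aux_antitone_stab Pn hPanti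
    obtain ⟨S, hS⟩ := massey_aux_monotone_stab Qn hQmono
    set P : Submodule k (V i) := Pn R with hPdef
    set Q : Submodule k (V i) := Qn S with hQdef
    have hPfix : Φ P = P := by rw [hPdef, ← hPsucc R, hR]
    have hQfix : Φ Q = Q := by rw [hQdef, ← hQsucc S, hS]
    -- a chain of length `m` starting at `x` puts `x` in `Pn m`
    have claimA : ∀ m (c : ℕ → V i),
        (∀ j : ℕ, 1 ≤ j → j ≤ m → A (c j) + B (c (j - 1)) = 0) → c 0 ∈ Pn m := by
      intro m
      induction m with
      | zero => intro c _; exact Submodule.mem_top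
      | succ m ih =>
        intro c hc
        rw [hPsucc m]
        have hc1 : c 1 ∈ Pn m := by
          apply ih (fun j => c (j + 1))
          intro j hj1 hjm
          have h := hc (j + 1) (by omega) (by omega)
          have e1 : j + 1 - 1 = j := by omega
          rw [e1] at h
          show A (c (j + 1)) + B (c (j - 1 + 1)) = 0
          have e2 : j - 1 + 1 = j := by omega
          rw [e2]
          exact h
        have h1 : A (c 1) + B (c 0) = 0 := hc 1 le_rfl (by omega)
        have : B (c 0) = A (-(c 1)) := by
          rw [map_neg]
          exact eq_neg_of_add_eq_zero_right h1
        simp only [hΦdef, Submodule.mem_comap, this]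
        exact Submodule.mem_map_of_mem (Submodule.neg_mem _ hc1)
    -- membership in `Qn m` gives a terminating chain
    have claimB : ∀ m (x : V i), x ∈ Qn m → ∃ d : ℕ → V i, d 0 = x ∧
        (∀ j : ℕ, 1 ≤ j → j ≤ m → A (d j) + B (d (j - 1)) = 0) ∧ B (d m) = 0 := by
      intro m
      induction m with
      | zero =>
        intro x hx
        exact ⟨fun _ => x, rfl, fun j hj1 hj0 => absurd (le_trans hj1 hj0) (by omega), hx⟩
      | succ m ih =>
        intro x hx
        rw [hQsucc m] at hx
        simp only [hΦdef, Submodule.mem_comap, Submodule.mem_map] at hx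
        obtain ⟨y, hyQ, hy⟩ := hx
        obtain ⟨d', hd'0, hd'mid, hd'top⟩ := ih (-y) (Submodule.neg_mem _ hyQ)
        refine ⟨fun j => if j = 0 then x else d' (j - 1), by simp, ?_, ?_⟩
        · intro j hj1 hjm
          rcases Nat.eq_or_lt_of_le hj1 with h1 | h1
          · have hj : j = 1 := h1.symm
            subst hj
            show A (if (1:ℕ) = 0 then x else d' (1 - 1)) +
              B (if (1 - 1 : ℕ) = 0 then x else d' (1 - 1 - 1)) = 0
            simp only [if_neg (one_ne_zero), Nat.sub_self, if_pos rfl]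
            rw [hd'0, map_neg, hy]
            simp
          · have hj0 : ¬ j = 0 := by omega
            have hj10 : ¬ j - 1 = 0 := by omega
            simp only [if_neg hj0, if_neg hj10]
            exact hd'mid (j - 1) (by omega) (by omega)
        · simp only [if_neg (by omega : ¬ m + 1 = 0), Nat.add_sub_cancel]
          exact hd'top
    -- apply (b) at length R + 2
    obtain ⟨c, h0, hcls, hchain⟩ := hb (R + 2) (by omega)
    have hc0P : c 0 ∈ P := by
      have h1 : c 0 ∈ Pn (R + 1) := claimA (R + 1) c (by
        intro j hj1 hjm
        exact hchain j hj1 (by omega))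
      rwa [hR] at h1
    -- the key lemma
    have hc0Q : c 0 ∈ Q := by
      refine massey_aux_key A B P Q ?_ ?_ ?_ (c 0) hc0P h0
      · intro x hx
        rw [← hPfix] at hx
        simp only [hΦdef, Submodule.mem_comap, Submodule.mem_map] at hx
        obtain ⟨y, hy1, hy2⟩ := hx
        exact ⟨y, hy1, hy2⟩
      · intro y hy
        have : y ∈ Φ Q := by
          simp only [hΦdef, Submodule.mem_comap]
          exact hy
        rwa [hQfix] at this
      · intro y hy
        rw [← hQfix] at hy
        simpa only [hΦdef, Submodule.mem_comap] using hy
    obtain ⟨d, hd0, hdmid, hdtop⟩ := claimB S (c 0) hc0Q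
    refine ⟨S, d, by rw [hd0]; exact h0, by rw [hd0]; exact hcls, hdmid, hdtop⟩
end
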